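/- Let f : ℕ → ℕ and define F as in SafeComp: F(x, c) = (x, c) if f x = x, else (f x, H (pair x c)). If iterating f from d reaches a fixed point after exactly n steps (f^[n] d = f^[n+1] d and f^[k] d ≠ f^[k+1] d for k < n), then iterating F from (d, H d) reaches a fixed point after exactly n steps, and its first component equals f^[n] d. -/
import Mathlib

/-- Adding certificate computation does not change the number of iterations or the
result: if iterating `f` from `d` converges after exactly `n` steps, then iterating
the augmented `F` from `(d, H d)` converges after exactly `n` steps, and the first
component of the fixed point equals `f^[n] d`. -/
theorem augmented_iteration_count (f H : ℕ → ℕ) (pair : ℕ → ℕ → ℕ)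
    (hpair : Function.Injective2 pair)
    (F : ℕ × ℕ → ℕ × ℕ)
    (hfix : ∀ x c, f x = x → F (x, c) = (x, c))
    (hstep : ∀ x c, f x ≠ x → F (x, c) = (f x, H (pair x c)))
    (d n : ℕ)
    (hn : f^[n] d = f^[n + 1] d)
    (hmin : ∀ k < n, f^[k] d ≠ f^[k + 1] d) :
    F^[n] (d, H d) = F^[n + 1] (d, H d) ∧
    (∀ k < n, F^[k] (d, H d) ≠ F^[k + 1] (d, H d)) ∧
    (F^[n] (d, H d)).1 = f^[n] d := by
  have key : ∀ k ≤ n, (F^[k] (d, H d)).1 = f^[k] d := by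
    intro k hk
    induction k with
    | zero => simp
    | succ m ih =>
      have hm : m ≤ n := Nat.le_of_succ_le hk
      have ih' := ih hm
      have hne : f (f^[m] d) ≠ f^[m] d := by
        have := hmin m hk
        rw [Function.iterate_succ_apply'] at this
        exact fun h => this h.symm
      have hF : F^[m] (d, H d) = (f^[m] d, (F^[m] (d, H d)).2) := by
        rw [← ih']
      rw [Function.iterate_succ_apply', hF,
        hstep _ _ hne, Function.iterate_succ_apply']
  have keyn := key n le_rfl
  have hFn : F^[n] (d, H d) = (f^[n] d, (F^[n] (d, H d)).2) := by rw [← keyn]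
  have hfixn : f (f^[n] d) = f^[n] d := by
    rw [Function.iterate_succ_apply'] at hn; exact hn.symm
  refine ⟨?_, ?_, keyn⟩
  · rw [Function.iterate_succ_apply', hFn, hfix _ _ hfixn]
  · intro k hk h
    apply hmin k hk
    have h1 := key k (le_of_lt hk)
    have h2 := key (k + 1) hk
    rw [← h1, ← h2, h]
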